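/- Let (X,d) be a metric space and G : X → [0,∞) Borel. Then for all x, y ∈ X, d_G(x,y) = inf_{T>0} E_G^T(x,y), where both sides take values in [0,+∞]. -/

import Mathlib

open MeasureTheory Set Filter
open scoped ENNReal

noncomputable section

/-- `m` is a (nonnegative, integrable) upper speed of the curve `γ` on `[a,b]`:
`dist (γ s) (γ t) ≤ ∫_s^t m` for all `a ≤ s ≤ t ≤ b`. -/
def IsUpperSpeedOn {X : Type*} [MetricSpace X] (γ : ℝ → X) (m : ℝ → ℝ) (a b : ℝ) : Prop :=
  (∀ r ∈ Set.Icc a b, 0 ≤ m r) ∧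
  IntervalIntegrable m MeasureTheory.volume a b ∧
  ∀ s t : ℝ, a ≤ s → s ≤ t → t ≤ b → dist (γ s) (γ t) ≤ ∫ r in s..t, m r

/-- The Finsler cost `d_G(x,y)`: the infimum of `∫_0^1 m(t) G(γ(t)) dt` over continuous
curves `γ : [0,1] → X` joining `x` to `y` with integrable upper speed `m`;
`+∞` if no admissible pair exists. -/
def finslerCost {X : Type*} [MetricSpace X] (G : X → ℝ) (x y : X) : ℝ≥0∞ :=
  sInf { c : ℝ≥0∞ | ∃ γ : ℝ → X, ∃ m : ℝ → ℝ,
    ContinuousOn γ (Set.Icc 0 1) ∧ γ 0 = x ∧ γ 1 = y ∧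
    IsUpperSpeedOn γ m 0 1 ∧
    c = ∫⁻ t in Set.Ioc (0:ℝ) 1, ENNReal.ofReal (m t * G (γ t)) }

/-- The action `E_G^T(x,y)`: the infimum of `∫_0^T ((1/2) m(t)² + (1/2) G(γ(t))²) dt` over
continuous curves `γ : [0,T] → X` joining `x` to `y` with square-integrable upper speed `m`;
`+∞` if no admissible pair exists. -/
def actionCost {X : Type*} [MetricSpace X] (G : X → ℝ) (T : ℝ) (x y : X) : ℝ≥0∞ :=
  sInf { c : ℝ≥0∞ | ∃ γ : ℝ → X, ∃ m : ℝ → ℝ,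
    ContinuousOn γ (Set.Icc 0 T) ∧ γ 0 = x ∧ γ T = y ∧
    IsUpperSpeedOn γ m 0 T ∧
    IntervalIntegrable (fun t => (m t) ^ 2) MeasureTheory.volume 0 T ∧
    c = ∫⁻ t in Set.Ioc (0:ℝ) T,
          ENNReal.ofReal ((1/2) * (m t) ^ 2 + (1/2) * (G (γ t)) ^ 2) }

/-- `G` is a strong upper gradient of `v`: along every continuous curve with integrable
upper speed `m`, `|v(γ t) − v(γ s)| ≤ ∫_s^t G(γ r) m(r) dr` (the right-hand side taken as a
possibly infinite nonnegative integral). -/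
def IsStrongUpperGradient {X : Type*} [MetricSpace X] (G v : X → ℝ) : Prop :=
  ∀ (a b : ℝ) (γ : ℝ → X) (m : ℝ → ℝ),
    ContinuousOn γ (Set.Icc a b) → IsUpperSpeedOn γ m a b →
    ∀ s t : ℝ, a ≤ s → s ≤ t → t ≤ b →
      ENNReal.ofReal |v (γ t) - v (γ s)| ≤
        ∫⁻ r in Set.Ioc s t, ENNReal.ofReal (G (γ r) * m r)

/-- A gradient-flow curve (curve of maximal slope in energy-dissipation form) of `v` with
respect to `G`: `η` is continuous on `[0,∞)`, `G∘η` is square-integrable on compacts and is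
an upper speed of `η` on every compact subinterval of `[0,∞)`, and the energy-dissipation
equality `v(η s) − v(η t) = ∫_s^t G(η r)² dr` holds for `0 ≤ s ≤ t`. -/
def IsGradientFlowCurve {X : Type*} [MetricSpace X] (v G : X → ℝ) (η : ℝ → X) : Prop :=
  ContinuousOn η (Set.Ici 0) ∧
  (∀ b : ℝ, 0 ≤ b → IntervalIntegrable (fun t => (G (η t)) ^ 2) MeasureTheory.volume 0 b) ∧
  (∀ a b : ℝ, 0 ≤ a → a ≤ b → IsUpperSpeedOn η (fun t => G (η t)) a b) ∧
  ∀ s t : ℝ, 0 ≤ s → s ≤ t → v (η s) - v (η t) = ∫ r in s..t, (G (η r)) ^ 2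

/-!
Rescaling a curve on `[0, T]` to `[0, 1]` leaves `∫ m G(γ)` unchanged, and `m G ≤ (m² + G²) / 2`;
hence `d_G ≤ E_G^T`. Conversely, given a curve `γ` on `[0, 1]` with upper speed `m` and `δ > 0`,
run it on the clock `φ(t) = ∫₀ᵗ m / (G∘γ + δ)`, i.e. follow `γ ∘ ψ` on `[0, φ 1]` where `ψ` is the
first hitting time of `φ`. Then `ψ` pushes Lebesgue measure forward to `φ' dt` and `ψ` only
jumps over intervals on which `m` vanishes, so `γ ∘ ψ` has upper speed `G∘γ∘ψ + δ` and its action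
is at most `∫ (G∘γ∘ψ + δ)² = ∫₀¹ (G∘γ + δ)² φ' = ∫₀¹ (G∘γ + δ) m`. Let `δ → 0`.
-/

open Topology

lemma ofReal_intervalIntegral_eq_setLIntegral {f : ℝ → ℝ} {c d : ℝ} (hcd : c ≤ d)
    (hf : IntervalIntegrable f volume c d) (hf0 : ∀ t ∈ Ioc c d, 0 ≤ f t) :
    ENNReal.ofReal (∫ t in c..d, f t) = ∫⁻ t in Ioc c d, ENNReal.ofReal (f t) := by
  rw [intervalIntegral.integral_of_le hcd, ofReal_integral_eq_lintegral_ofReal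
    ((intervalIntegrable_iff_integrableOn_Ioc_of_le hcd).1 hf)
    ((ae_restrict_iff' measurableSet_Ioc).2 (ae_of_all _ hf0))]

lemma le_of_forall_pos_le_add_ofReal_mul {x y z : ℝ≥0∞} (hz : z ≠ ∞)
    (h : ∀ δ : ℝ, 0 < δ → x ≤ y + ENNReal.ofReal δ * z) : x ≤ y := by
  have hlim : Tendsto (fun δ : ℝ => y + ENNReal.ofReal δ * z) (𝓝[>] 0) (𝓝 y) := by
    have hcont : Continuous fun δ : ℝ => y + ENNReal.ofReal δ * z :=
      continuous_const.add ((ENNReal.continuous_mul_const hz).comp ENNReal.continuous_ofReal)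
    simpa using (hcont.tendsto 0).mono_left nhdsWithin_le_nhds
  exact ge_of_tendsto hlim (eventually_nhdsWithin_of_forall h)

lemma IntervalIntegrable.mono_set_of_le {f : ℝ → ℝ} {a b c d : ℝ}
    (hf : IntervalIntegrable f volume a b) (hac : a ≤ c) (hcd : c ≤ d) (hdb : d ≤ b) :
    IntervalIntegrable f volume c d :=
  hf.mono_set (uIcc_subset_uIcc (mem_uIcc_of_le hac (hcd.trans hdb))
    (mem_uIcc_of_le (hac.trans hcd) hdb))

namespace IsUpperSpeedOn

variable {X : Type*} [MetricSpace X] {γ : ℝ → X} {m : ℝ → ℝ} {a b c d : ℝ}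

lemma dist_le_dist_primitive (hγ : IsUpperSpeedOn γ m a b) {u v : ℝ} (hu : u ∈ Icc a b)
    (hv : v ∈ Icc a b) :
    dist (γ u) (γ v) ≤ dist (∫ r in a..u, m r) (∫ r in a..v, m r) := by
  wlog huv : u ≤ v generalizing u v
  · rw [dist_comm, dist_comm (∫ r in a..u, m r)]; exact this hv hu (le_of_not_ge huv)
  rw [Real.dist_eq, abs_sub_comm, intervalIntegral.integral_interval_sub_left
    (hγ.2.1.mono_set_of_le le_rfl (hu.1.trans huv) hv.2)
    (hγ.2.1.mono_set_of_le le_rfl hu.1 hu.2)]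
  exact (hγ.2.2 u v hu.1 huv hv.2).trans (le_abs_self _)

lemma setLIntegral_ofReal_lt_top (hγ : IsUpperSpeedOn γ m a b) (hab : a ≤ b) :
    ∫⁻ t in Ioc a b, ENNReal.ofReal (m t) < ∞ := by
  rw [← ofReal_intervalIntegral_eq_setLIntegral hab hγ.2.1
    fun t ht => hγ.1 t (Ioc_subset_Icc_self ht)]
  exact ENNReal.ofReal_lt_top

lemma continuousOn (hγ : IsUpperSpeedOn γ m a b) : ContinuousOn γ (Icc a b) := by
  rcases lt_or_ge b a with hba | hab
  · simp [Icc_eq_empty_of_lt hba]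
  have hP : ContinuousOn (fun t => ∫ r in a..t, m r) (Icc a b) := by
    simpa [uIcc_of_le hab] using
      intervalIntegral.continuousOn_primitive_interval' hγ.2.1 left_mem_uIcc
  intro u hu
  refine tendsto_iff_dist_tendsto_zero.2 (squeeze_zero' (Eventually.of_forall fun _ => dist_nonneg)
    ?_ (tendsto_iff_dist_tendsto_zero.1 (hP u hu)))
  filter_upwards [self_mem_nhdsWithin] with v hv using hγ.dist_le_dist_primitive hv hu

lemma apply_eq_of_ae_eq_zero (hγ : IsUpperSpeedOn γ m a b) (hac : a ≤ c) (hcd : c ≤ d)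
    (hdb : d ≤ b) (hm : m =ᵐ[volume.restrict (Ioc c d)] 0) : γ c = γ d := by
  have := hγ.2.2 c d hac hcd hdb
  rwa [intervalIntegral.integral_of_le hcd, integral_eq_zero_of_ae hm, dist_le_zero] at this

lemma comp_mul_left (hγ : IsUpperSpeedOn γ m (c * a) (c * b)) (hc : 0 < c) :
    IsUpperSpeedOn (fun t => γ (c * t)) (fun t => c * m (c * t)) a b := by
  refine ⟨fun r hr => mul_nonneg hc.le (hγ.1 _ ?_), ?_, fun s t has hst htb => ?_⟩
  · exact ⟨mul_le_mul_of_nonneg_left hr.1 hc.le, mul_le_mul_of_nonneg_left hr.2 hc.le⟩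
  · simpa [hc.ne'] using (hγ.2.1.comp_mul_left (c := c)).const_mul c
  · dsimp only
    rw [intervalIntegral.integral_const_mul, intervalIntegral.mul_integral_comp_mul_left]
    exact hγ.2.2 _ _ (mul_le_mul_of_nonneg_left has hc.le) (mul_le_mul_of_nonneg_left hst hc.le)
      (mul_le_mul_of_nonneg_left htb hc.le)

end IsUpperSpeedOn

lemma setLIntegral_Ioc_comp_mul_left (F : ℝ → ℝ≥0∞) {c : ℝ} (hc : 0 < c) (a b : ℝ) :
    ∫⁻ t in Ioc a b, ENNReal.ofReal c * F (c * t) = ∫⁻ u in Ioc (c * a) (c * b), F u := by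
  have he := measurableEmbedding_mulLeft₀ hc.ne'
  conv_rhs => rw [← Real.smul_map_volume_mul_left hc.ne', Measure.restrict_smul,
    lintegral_smul_measure, he.restrict_map, he.lintegral_map, preimage_const_mul_Ioc₀ _ _ hc,
    mul_div_cancel_left₀ _ hc.ne', mul_div_cancel_left₀ _ hc.ne', abs_of_pos hc, smul_eq_mul]
  exact lintegral_const_mul' _ _ ENNReal.ofReal_ne_top

/-- The first time in `[a, b]` at which `φ` reaches the level `u`, and `b` if it never does
(inserting `b` also keeps this monotone in `u`). -/
def hittingTime (φ : ℝ → ℝ) (a b u : ℝ) : ℝ :=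
  sInf (insert b {t ∈ Icc a b | u ≤ φ t})

section HittingTime

variable {φ : ℝ → ℝ} {a b u v t : ℝ}

lemma bddBelow_hittingTime_set : BddBelow (insert b {t ∈ Icc a b | u ≤ φ t}) :=
  ⟨min a b, by rintro t (rfl | ⟨ht, -⟩); exacts [min_le_right _ _, (min_le_left _ _).trans ht.1]⟩

lemma hittingTime_le (ht : t ∈ Icc a b) (hu : u ≤ φ t) : hittingTime φ a b u ≤ t :=
  csInf_le bddBelow_hittingTime_set (Or.inr ⟨ht, hu⟩)

lemma hittingTime_mem_Icc (hab : a ≤ b) : hittingTime φ a b u ∈ Icc a b :=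
  ⟨le_csInf (insert_nonempty _ _) (by rintro t (rfl | ⟨ht, -⟩); exacts [hab, ht.1]),
    csInf_le bddBelow_hittingTime_set (mem_insert _ _)⟩

lemma Icc_hittingTime_subset (hab : a ≤ b) :
    Icc (hittingTime φ a b u) (hittingTime φ a b v) ⊆ Icc a b :=
  Icc_subset_Icc (hittingTime_mem_Icc hab).1 (hittingTime_mem_Icc hab).2

lemma monotone_hittingTime : Monotone (hittingTime φ a b) := fun _ _ huv =>
  csInf_le_csInf bddBelow_hittingTime_set (insert_nonempty _ _)
    (insert_subset_insert fun _ ⟨ht, hv⟩ => ⟨ht, huv.trans hv⟩)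

lemma hittingTime_apply_left (hab : a ≤ b) : hittingTime φ a b (φ a) = a :=
  le_antisymm (hittingTime_le ⟨le_rfl, hab⟩ le_rfl) (hittingTime_mem_Icc hab).1

lemma le_apply_hittingTime (hφ : ContinuousOn φ (Icc a b)) (hu : u ≤ φ b) :
    u ≤ φ (hittingTime φ a b u) := by
  have hclosed : IsClosed (insert b {t ∈ Icc a b | u ≤ φ t}) :=
    isClosed_singleton.union (hφ.preimage_isClosed_of_isClosed isClosed_Icc isClosed_Ici)
  rcases hclosed.csInf_mem (insert_nonempty _ _) bddBelow_hittingTime_set with h | h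
  · rwa [hittingTime, h]
  · exact h.2

lemma hittingTime_le_iff (hφ : ContinuousOn φ (Icc a b)) (hφm : MonotoneOn φ (Icc a b))
    (hu : u ≤ φ b) (ht : t ∈ Icc a b) :
    hittingTime φ a b u ≤ t ↔ u ≤ φ t :=
  ⟨fun h => (le_apply_hittingTime hφ hu).trans
    (hφm (hittingTime_mem_Icc (ht.1.trans ht.2)) ht h), hittingTime_le ht⟩

lemma apply_hittingTime (hφ : ContinuousOn φ (Icc a b)) (hab : a ≤ b) (hu : u ∈ Icc (φ a) (φ b)) :
    φ (hittingTime φ a b u) = u := by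
  have hψ := hittingTime_mem_Icc (φ := φ) (u := u) hab
  obtain ⟨t, ht, hφt⟩ := intermediate_value_Icc hψ.1 (hφ.mono (Icc_subset_Icc_right hψ.2))
    ⟨hu.1, le_apply_hittingTime hφ hu.2⟩
  rwa [← le_antisymm ht.2 (hittingTime_le ⟨ht.1, ht.2.trans hψ.2⟩ hφt.ge)]

lemma hittingTime_le_hittingTime_iff (hφ : ContinuousOn φ (Icc a b))
    (hφm : MonotoneOn φ (Icc a b)) (hab : a ≤ b) (hu : u ∈ Icc (φ a) (φ b))
    (hv : v ∈ Icc (φ a) (φ b)) : hittingTime φ a b u ≤ hittingTime φ a b v ↔ u ≤ v := by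
  rw [hittingTime_le_iff hφ hφm hu.2 (hittingTime_mem_Icc hab), apply_hittingTime hφ hab hv]

end HittingTime

section ChangeOfVariables

variable {φ h : ℝ → ℝ} {a b s s' : ℝ}

theorem map_restrict_Ioc_hittingTime (hab : a ≤ b) (hφ : ContinuousOn φ (Icc a b))
    (hφm : MonotoneOn φ (Icc a b))
    (hφh : ∀ c d, a ≤ c → c ≤ d → d ≤ b →
      ∫⁻ t in Ioc c d, ENNReal.ofReal (h t) = ENNReal.ofReal (φ d - φ c))
    (hs : φ a ≤ s) (hss' : s ≤ s') (hs' : s' ≤ φ b) :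
    (volume.restrict (Ioc s s')).map (hittingTime φ a b) =
      (volume.restrict (Ioc (hittingTime φ a b s) (hittingTime φ a b s'))).withDensity
        fun t => ENNReal.ofReal (h t) := by
  set ψ := hittingTime φ a b
  have hsI : s ∈ Icc (φ a) (φ b) := ⟨hs, hss'.trans hs'⟩
  have hs'I : s' ∈ Icc (φ a) (φ b) := ⟨hs.trans hss', hs'⟩
  refine Measure.ext_of_Iic _ _ fun c => ?_
  -- On `(s, s']`, `ψ u ≤ c` iff `u ≤ φ t` for `t` the projection of `c` onto `[ψ s, ψ s']`.
  set t := max (ψ s) (min c (ψ s'))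
  have htI : t ∈ Icc (ψ s) (ψ s') :=
    ⟨le_max_left _ _, max_le (monotone_hittingTime hss') (min_le_right _ _)⟩
  have htab : t ∈ Icc a b :=
    ⟨(hittingTime_mem_Icc hab).1.trans htI.1, htI.2.trans (hittingTime_mem_Icc hab).2⟩
  have hφt : φ t ≤ s' :=
    apply_hittingTime hφ hab hs'I ▸ hφm htab (hittingTime_mem_Icc hab) htI.2
  have hpre : ψ ⁻¹' Iic c ∩ Ioc s s' = Ioc s (φ t) := by
    ext u
    simp only [mem_inter_iff, mem_preimage, mem_Iic, mem_Ioc]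
    constructor
    · rintro ⟨hc, hsu, hus'⟩
      have huI : u ∈ Icc (φ a) (φ b) := ⟨hs.trans hsu.le, hus'.trans hs'⟩
      refine ⟨hsu, (hittingTime_le_iff hφ hφm huI.2 htab).1 (le_max_of_le_right (le_min hc ?_))⟩
      exact (hittingTime_le_hittingTime_iff hφ hφm hab huI hs'I).2 hus'
    · rintro ⟨hsu, hut⟩
      have huI : u ∈ Icc (φ a) (φ b) := ⟨hs.trans hsu.le, (hut.trans hφt).trans hs'⟩
      have hψu : ψ u ≤ t := (hittingTime_le_iff hφ hφm huI.2 htab).2 hut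
      refine ⟨?_, hsu, hut.trans hφt⟩
      rcases max_choice (ψ s) (min c (ψ s')) with ht | ht
      · exact absurd ((hittingTime_le_hittingTime_iff hφ hφm hab huI hsI).1 (hψu.trans_eq ht))
          (not_le.2 hsu)
      · exact (hψu.trans_eq ht).trans (min_le_left _ _)
  have hIoc : Iic c ∩ Ioc (ψ s) (ψ s') = Ioc (ψ s) t := by
    ext u
    simp only [mem_inter_iff, mem_Iic, mem_Ioc, t]
    grind
  rw [Measure.map_apply monotone_hittingTime.measurable measurableSet_Iic,
    Measure.restrict_apply (monotone_hittingTime.measurable measurableSet_Iic), hpre,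
    Real.volume_Ioc, withDensity_apply _ measurableSet_Iic,
    Measure.restrict_restrict measurableSet_Iic, hIoc,
    hφh _ _ (hittingTime_mem_Icc hab).1 htI.1 htab.2, apply_hittingTime hφ hab hsI]

end ChangeOfVariables

section Primitive

variable {h : ℝ → ℝ} {a b s s' : ℝ}

lemma continuousOn_primitive_of_le (hint : IntervalIntegrable h volume a b) (hab : a ≤ b) :
    ContinuousOn (fun t => ∫ r in a..t, h r) (Icc a b) := by
  simpa [uIcc_of_le hab] using
    intervalIntegral.continuousOn_primitive_interval' hint left_mem_uIcc

lemma monotoneOn_primitive (hint : IntervalIntegrable h volume a b)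
    (h0 : ∀ t ∈ Icc a b, 0 ≤ h t) : MonotoneOn (fun t => ∫ r in a..t, h r) (Icc a b) :=
  fun _ hc _ hd hcd => intervalIntegral.integral_mono_interval le_rfl hc.1 hcd
    ((ae_restrict_iff' measurableSet_Ioc).2
      (ae_of_all _ fun t ht => h0 t ⟨ht.1.le, ht.2.trans hd.2⟩))
    (hint.mono_set_of_le le_rfl hd.1 hd.2)

lemma setLIntegral_ofReal_eq_primitive_sub (hint : IntervalIntegrable h volume a b)
    (h0 : ∀ t ∈ Icc a b, 0 ≤ h t) {c d : ℝ} (hac : a ≤ c) (hcd : c ≤ d) (hdb : d ≤ b) :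
    ∫⁻ t in Ioc c d, ENNReal.ofReal (h t) =
      ENNReal.ofReal ((∫ r in a..d, h r) - ∫ r in a..c, h r) := by
  rw [intervalIntegral.integral_interval_sub_left (hint.mono_set_of_le le_rfl (hac.trans hcd) hdb)
    (hint.mono_set_of_le le_rfl hac (hcd.trans hdb)), ofReal_intervalIntegral_eq_setLIntegral hcd
    (hint.mono_set_of_le hac hcd hdb) fun t ht => h0 t ⟨hac.trans ht.1.le, ht.2.trans hdb⟩]

theorem setLIntegral_comp_hittingTime_primitive (hab : a ≤ b)
    (hint : IntervalIntegrable h volume a b) (h0 : ∀ t ∈ Icc a b, 0 ≤ h t) {F : ℝ → ℝ≥0∞}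
    (hF : Measurable F) (hs : 0 ≤ s) (hss' : s ≤ s') (hs' : s' ≤ ∫ r in a..b, h r) :
    ∫⁻ u in Ioc s s', F (hittingTime (fun t => ∫ r in a..t, h r) a b u) =
      ∫⁻ t in Ioc (hittingTime (fun t => ∫ r in a..t, h r) a b s)
        (hittingTime (fun t => ∫ r in a..t, h r) a b s'), F t * ENNReal.ofReal (h t) := by
  have hψ : Measurable (hittingTime (fun t => ∫ r in a..t, h r) a b) :=
    monotone_hittingTime.measurable
  have hh : AEMeasurable (fun t => ENNReal.ofReal (h t))
      (volume.restrict (Ioc (hittingTime (fun t => ∫ r in a..t, h r) a b s)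
        (hittingTime (fun t => ∫ r in a..t, h r) a b s'))) :=
    hint.1.aemeasurable.ennreal_ofReal.mono_measure (Measure.restrict_mono
      (Ioc_subset_Ioc (hittingTime_mem_Icc hab).1 (hittingTime_mem_Icc hab).2) le_rfl)
  rw [← lintegral_map hF hψ,
    map_restrict_Ioc_hittingTime hab (continuousOn_primitive_of_le hint hab)
      (monotoneOn_primitive hint h0) (fun c d => setLIntegral_ofReal_eq_primitive_sub hint h0)
      (by simpa using hs) hss' hs',
    lintegral_withDensity_eq_lintegral_mul₀ hh hF.aemeasurable]
  exact lintegral_congr fun t => mul_comm _ _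

end Primitive

def timeChange (m w : ℝ → ℝ) (a b : ℝ) : ℝ → ℝ :=
  hittingTime (fun t => ∫ r in a..t, m r / w r) a b

lemma timeChange_zero {m w : ℝ → ℝ} {a b : ℝ} (hab : a ≤ b) : timeChange m w a b 0 = a := by
  unfold timeChange
  simpa using hittingTime_apply_left (φ := fun t => ∫ r in a..t, m r / w r) hab

namespace IsUpperSpeedOn

variable {X : Type*} [MetricSpace X] {γ : ℝ → X} {m w : ℝ → ℝ} {a b δ : ℝ}

lemma intervalIntegrable_div (hγ : IsUpperSpeedOn γ m a b) (hw : Measurable w) (hδ : 0 < δ)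
    (hwδ : ∀ t, δ ≤ w t) : IntervalIntegrable (fun t => m t / w t) volume a b := by
  simp only [div_eq_mul_inv]
  refine intervalIntegrable_iff.2 ((intervalIntegrable_iff.1 hγ.2.1).mul_bdd (c := δ⁻¹)
    hw.inv.aestronglyMeasurable (ae_of_all _ fun t => ?_))
  rw [norm_inv, Real.norm_of_nonneg (hδ.le.trans (hwδ t))]
  exact inv_anti₀ hδ (hwδ t)

lemma div_nonneg_of_pos (hγ : IsUpperSpeedOn γ m a b) (hw : ∀ t, 0 < w t) :
    ∀ t ∈ Icc a b, 0 ≤ m t / w t :=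
  fun t ht => div_nonneg (hγ.1 t ht) (hw t).le

lemma apply_timeChange_primitive (hγ : IsUpperSpeedOn γ m a b) (hw : Measurable w) (hδ : 0 < δ)
    (hwδ : ∀ t, δ ≤ w t) {t : ℝ} (ht : t ∈ Icc a b) :
    γ (timeChange m w a b (∫ r in a..t, m r / w r)) = γ t := by
  have hw0 : ∀ t, 0 < w t := fun t => hδ.trans_le (hwδ t)
  have hab : a ≤ b := ht.1.trans ht.2
  have hint := hγ.intervalIntegrable_div hw hδ hwδ
  have h0 := hγ.div_nonneg_of_pos hw0
  have hφ := continuousOn_primitive_of_le hint hab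
  have hφm := monotoneOn_primitive hint h0
  set t' := timeChange m w a b (∫ r in a..t, m r / w r)
  have ht' : t' ∈ Icc a b := hittingTime_mem_Icc hab
  have ht't : t' ≤ t := hittingTime_le ht le_rfl
  have hφt' : ∫ r in a..t', m r / w r = ∫ r in a..t, m r / w r :=
    apply_hittingTime hφ hab ⟨hφm ⟨le_rfl, hab⟩ ht ht.1, hφm ht ⟨hab, le_rfl⟩ ht.2⟩
  have hzero : ∫⁻ r in Ioc t' t, ENNReal.ofReal (m r / w r) = 0 := by
    rw [setLIntegral_ofReal_eq_primitive_sub hint h0 ht'.1 ht't ht.2, hφt', sub_self,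
      ENNReal.ofReal_zero]
  have hmeas : AEMeasurable (fun r => ENNReal.ofReal (m r / w r)) (volume.restrict (Ioc t' t)) :=
    (hint.1.mono_set (Ioc_subset_Ioc ht'.1 ht.2)).aemeasurable.ennreal_ofReal
  refine hγ.apply_eq_of_ae_eq_zero ht'.1 ht't ht.2 ?_
  filter_upwards [(lintegral_eq_zero_iff' hmeas).1 hzero, ae_restrict_mem measurableSet_Ioc]
    with r hr hrI
  have hle : m r / w r ≤ 0 := ENNReal.ofReal_eq_zero.1 hr
  exact le_antisymm (by simpa using (div_le_iff₀ (hw0 r)).1 hle)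
    (hγ.1 r ⟨ht'.1.trans hrI.1.le, hrI.2.trans ht.2⟩)

lemma setLIntegral_mul_comp_timeChange (hγ : IsUpperSpeedOn γ m a b) (hab : a ≤ b)
    (hw : Measurable w) (hδ : 0 < δ) (hwδ : ∀ t, δ ≤ w t) {f : ℝ → ℝ} (hf : Measurable f)
    {s s' : ℝ} (hs : 0 ≤ s) (hss' : s ≤ s') (hs' : s' ≤ ∫ r in a..b, m r / w r) :
    ∫⁻ u in Ioc s s', ENNReal.ofReal (f (timeChange m w a b u) * w (timeChange m w a b u)) =
      ∫⁻ t in Ioc (timeChange m w a b s) (timeChange m w a b s'), ENNReal.ofReal (f t * m t) := by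
  have hw0 : ∀ t, 0 < w t := fun t => hδ.trans_le (hwδ t)
  have h0 := hγ.div_nonneg_of_pos hw0
  refine (setLIntegral_comp_hittingTime_primitive hab (hγ.intervalIntegrable_div hw hδ hwδ) h0
    (F := fun t => ENNReal.ofReal (f t * w t)) (hf.mul hw).ennreal_ofReal hs hss' hs').trans ?_
  refine setLIntegral_congr_fun measurableSet_Ioc fun t ht => ?_
  rw [← ENNReal.ofReal_mul' (h0 t (Icc_hittingTime_subset hab (Ioc_subset_Icc_self ht))),
    mul_assoc, mul_div_cancel₀ _ (hw0 t).ne']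

lemma setLIntegral_comp_timeChange (hγ : IsUpperSpeedOn γ m a b) (hab : a ≤ b)
    (hw : Measurable w) (hδ : 0 < δ) (hwδ : ∀ t, δ ≤ w t) {s s' : ℝ} (hs : 0 ≤ s)
    (hss' : s ≤ s') (hs' : s' ≤ ∫ r in a..b, m r / w r) :
    ∫⁻ u in Ioc s s', ENNReal.ofReal (w (timeChange m w a b u)) =
      ∫⁻ t in Ioc (timeChange m w a b s) (timeChange m w a b s'), ENNReal.ofReal (m t) := by
  simpa using hγ.setLIntegral_mul_comp_timeChange hab hw hδ hwδ (f := fun _ => 1)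
    measurable_const hs hss' hs'

lemma intervalIntegrable_comp_timeChange (hγ : IsUpperSpeedOn γ m a b) (hab : a ≤ b)
    (hw : Measurable w) (hδ : 0 < δ) (hwδ : ∀ t, δ ≤ w t) :
    IntervalIntegrable (fun u => w (timeChange m w a b u)) volume 0 (∫ r in a..b, m r / w r) := by
  have hT : 0 ≤ ∫ r in a..b, m r / w r := intervalIntegral.integral_nonneg hab
    (hγ.div_nonneg_of_pos fun t => hδ.trans_le (hwδ t))
  refine (intervalIntegrable_iff_integrableOn_Ioc_of_le hT).2
    ⟨(hw.comp monotone_hittingTime.measurable).aestronglyMeasurable, ?_⟩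
  rw [hasFiniteIntegral_iff_ofReal (ae_of_all _ fun u => hδ.le.trans (hwδ _)),
    hγ.setLIntegral_comp_timeChange hab hw hδ hwδ le_rfl hT le_rfl]
  exact (lintegral_mono_set (Ioc_subset_Ioc (hittingTime_mem_Icc hab).1
    (hittingTime_mem_Icc hab).2)).trans_lt (hγ.setLIntegral_ofReal_lt_top hab)

lemma integral_comp_timeChange (hγ : IsUpperSpeedOn γ m a b) (hab : a ≤ b)
    (hw : Measurable w) (hδ : 0 < δ) (hwδ : ∀ t, δ ≤ w t) {s s' : ℝ} (hs : 0 ≤ s)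
    (hss' : s ≤ s') (hs' : s' ≤ ∫ r in a..b, m r / w r) :
    ∫ u in s..s', w (timeChange m w a b u) =
      ∫ t in timeChange m w a b s..timeChange m w a b s', m t := by
  have hψ : timeChange m w a b s ≤ timeChange m w a b s' := monotone_hittingTime hss'
  have hm0 : ∀ t ∈ Icc (timeChange m w a b s) (timeChange m w a b s'), 0 ≤ m t :=
    fun t ht => hγ.1 t (Icc_hittingTime_subset hab ht)
  rw [← ENNReal.ofReal_eq_ofReal_iff
      (intervalIntegral.integral_nonneg hss' fun u _ => hδ.le.trans (hwδ _))
      (intervalIntegral.integral_nonneg hψ hm0),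
    ofReal_intervalIntegral_eq_setLIntegral hss'
      ((hγ.intervalIntegrable_comp_timeChange hab hw hδ hwδ).mono_set_of_le hs hss' hs')
      fun u _ => hδ.le.trans (hwδ _),
    ofReal_intervalIntegral_eq_setLIntegral hψ
      (hγ.2.1.mono_set_of_le (hittingTime_mem_Icc hab).1 hψ (hittingTime_mem_Icc hab).2)
      fun t ht => hm0 t (Ioc_subset_Icc_self ht)]
  exact hγ.setLIntegral_comp_timeChange hab hw hδ hwδ hs hss' hs'

theorem comp_timeChange (hγ : IsUpperSpeedOn γ m a b) (hab : a ≤ b) (hw : Measurable w)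
    (hδ : 0 < δ) (hwδ : ∀ t, δ ≤ w t) :
    IsUpperSpeedOn (γ ∘ timeChange m w a b) (w ∘ timeChange m w a b) 0
      (∫ r in a..b, m r / w r) := by
  refine ⟨fun u _ => hδ.le.trans (hwδ _), hγ.intervalIntegrable_comp_timeChange hab hw hδ hwδ,
    fun s s' hs hss' hs' => ?_⟩
  simpa only [Function.comp_apply, hγ.integral_comp_timeChange hab hw hδ hwδ hs hss' hs'] using
    hγ.2.2 (timeChange m w a b s) (timeChange m w a b s') (hittingTime_mem_Icc hab).1
      (monotone_hittingTime hss') (hittingTime_mem_Icc hab).2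

end IsUpperSpeedOn

section Costs

variable {X : Type*} [MetricSpace X]

lemma finslerCost_le_setLIntegral (G : X → ℝ) {γ : ℝ → X} {m : ℝ → ℝ} {T : ℝ} (hT : 0 < T)
    (hγ : IsUpperSpeedOn γ m 0 T) :
    finslerCost G (γ 0) (γ T) ≤ ∫⁻ t in Ioc 0 T, ENNReal.ofReal (m t * G (γ t)) := by
  have hγ' : IsUpperSpeedOn (fun t => γ (T * t)) (fun t => T * m (T * t)) 0 1 :=
    IsUpperSpeedOn.comp_mul_left (by simpa using hγ) hT
  calc finslerCost G (γ 0) (γ T)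
      ≤ ∫⁻ t in Ioc 0 1, ENNReal.ofReal (T * m (T * t) * G (γ (T * t))) :=
        sInf_le ⟨_, _, hγ'.continuousOn, by simp, by simp, hγ', rfl⟩
    _ = ∫⁻ t in Ioc 0 1, ENNReal.ofReal T * ENNReal.ofReal (m (T * t) * G (γ (T * t))) :=
        lintegral_congr fun t => by rw [mul_assoc, ENNReal.ofReal_mul hT.le]
    _ = ∫⁻ t in Ioc (T * 0) (T * 1), ENNReal.ofReal (m t * G (γ t)) :=
        setLIntegral_Ioc_comp_mul_left (fun t => ENNReal.ofReal (m t * G (γ t))) hT 0 1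
    _ = ∫⁻ t in Ioc 0 T, ENNReal.ofReal (m t * G (γ t)) := by rw [mul_zero, mul_one]

lemma finslerCost_le_actionCost (G : X → ℝ) {T : ℝ} (hT : 0 < T) (x y : X) :
    finslerCost G x y ≤ actionCost G T x y := by
  refine le_sInf ?_
  rintro _ ⟨γ, m, -, rfl, rfl, hγ, -, rfl⟩
  refine (finslerCost_le_setLIntegral G hT hγ).trans (lintegral_mono fun t => ?_)
  exact ENNReal.ofReal_le_ofReal (by nlinarith [sq_nonneg (m t - G (γ t))])

lemma iInf_actionCost_self (G : X → ℝ) (x : X) : ⨅ (T : ℝ) (_ : 0 < T), actionCost G T x x = 0 := by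
  refine le_antisymm (le_of_forall_pos_le_add_ofReal_mul (z := ENNReal.ofReal (G x ^ 2 / 2))
    ENNReal.ofReal_ne_top fun T hT => (iInf₂_le T hT).trans (sInf_le_of_le
      ⟨fun _ => x, fun _ => 0, continuousOn_const, rfl, rfl,
        ⟨fun _ _ => le_rfl, intervalIntegrable_const, fun _ _ _ _ _ => by simp⟩,
        by simp, rfl⟩ ?_)) bot_le
  simp [Real.volume_Ioc, mul_comm, div_eq_inv_mul]

lemma iInf_actionCost_le_setLIntegral_mul {G : X → ℝ} {γ : ℝ → X} {m w : ℝ → ℝ} {a b δ : ℝ}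
    (hγ : IsUpperSpeedOn γ m a b) (hab : a ≤ b) (hw : Measurable w) (hδ : 0 < δ)
    (hwδ : ∀ t, δ ≤ w t) (hGw : ∀ t ∈ Icc a b, |G (γ t)| ≤ w t)
    (hfin : ∫⁻ t in Ioc a b, ENNReal.ofReal (w t * m t) ≠ ∞) :
    ⨅ (T : ℝ) (_ : 0 < T), actionCost G T (γ a) (γ b) ≤
      ∫⁻ t in Ioc a b, ENNReal.ofReal (w t * m t) := by
  have hψ := hγ.comp_timeChange hab hw hδ hwδ
  set T := ∫ r in a..b, m r / w r
  set ψ := timeChange m w a b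
  have hT0 : 0 ≤ T := intervalIntegral.integral_nonneg hab
    (hγ.div_nonneg_of_pos fun t => hδ.trans_le (hwδ t))
  have hψ0 : ψ 0 = a := timeChange_zero hab
  have hψT : γ (ψ T) = γ b := hγ.apply_timeChange_primitive hw hδ hwδ ⟨hab, le_rfl⟩
  rcases hT0.eq_or_lt with hT | hT
  · -- a clock of total length `0` cannot move `γ`
    rw [← hψ0, ← hψT, ← hT, iInf_actionCost_self]
    exact bot_le
  have hsq : ∫⁻ u in Ioc 0 T, ENNReal.ofReal (w (ψ u) * w (ψ u)) ≤
      ∫⁻ t in Ioc a b, ENNReal.ofReal (w t * m t) :=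
    (hγ.setLIntegral_mul_comp_timeChange hab hw hδ hwδ hw le_rfl hT0 le_rfl).trans_le
      (lintegral_mono_set (Ioc_subset_Ioc (hittingTime_mem_Icc hab).1 (hittingTime_mem_Icc hab).2))
  have hsqI : IntervalIntegrable (fun u => (w ∘ ψ) u ^ 2) volume 0 T := by
    refine (intervalIntegrable_iff_integrableOn_Ioc_of_le hT0).2
      ⟨((hw.comp monotone_hittingTime.measurable).pow_const 2).aestronglyMeasurable, ?_⟩
    rw [hasFiniteIntegral_iff_ofReal (ae_of_all _ fun _ => sq_nonneg _)]
    simpa [sq] using hsq.trans_lt hfin.lt_top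
  refine (iInf₂_le T hT).trans (sInf_le_of_le
    ⟨γ ∘ ψ, w ∘ ψ, hψ.continuousOn, by simp [hψ0], hψT, hψ, hsqI, rfl⟩ ?_)
  refine (lintegral_mono fun u => ENNReal.ofReal_le_ofReal ?_).trans hsq
  have hG := abs_le.1 (hGw (ψ u) (hittingTime_mem_Icc hab))
  have hG2 := sq_le_sq' hG.1 hG.2
  simp only [Function.comp_apply]
  nlinarith

variable [MeasurableSpace X] [BorelSpace X]

lemma iInf_actionCost_le_setLIntegral_add {G : X → ℝ} (hG0 : ∀ x, 0 ≤ G x)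
    (hGmeas : Measurable G) {γ : ℝ → X} {m : ℝ → ℝ} {a b δ : ℝ} (hγ : IsUpperSpeedOn γ m a b)
    (hab : a ≤ b) (hδ : 0 < δ) (hC : ∫⁻ t in Ioc a b, ENNReal.ofReal (m t * G (γ t)) ≠ ∞) :
    ⨅ (T : ℝ) (_ : 0 < T), actionCost G T (γ a) (γ b) ≤
      (∫⁻ t in Ioc a b, ENNReal.ofReal (m t * G (γ t))) +
        ENNReal.ofReal δ * ∫⁻ t in Ioc a b, ENNReal.ofReal (m t) := by
  -- `γ` is clamped to `[a, b]` so that `w` is measurable on all of `ℝ`.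
  set w : ℝ → ℝ := fun t => G (γ (max a (min t b))) + δ
  have hw : Measurable w := (hGmeas.comp (hγ.continuousOn.comp_continuous
    (continuous_const.max (continuous_id.min continuous_const))
    fun t => ⟨le_max_left _ _, max_le hab (min_le_right _ _)⟩).measurable).add_const δ
  have hwG : ∀ t ∈ Icc a b, w t = G (γ t) + δ := fun t ht => by
    simp only [w, min_eq_left ht.2, max_eq_right ht.1]
  have hcost : ∫⁻ t in Ioc a b, ENNReal.ofReal (w t * m t) =
      (∫⁻ t in Ioc a b, ENNReal.ofReal (m t * G (γ t))) +
        ENNReal.ofReal δ * ∫⁻ t in Ioc a b, ENNReal.ofReal (m t) := by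
    rw [← lintegral_const_mul' _ _ ENNReal.ofReal_ne_top,
      ← lintegral_add_right' (fun t => ENNReal.ofReal (m t * G (γ t)))
        (hγ.2.1.1.aemeasurable.ennreal_ofReal.const_mul _)]
    refine setLIntegral_congr_fun measurableSet_Ioc fun t ht => ?_
    have hm := hγ.1 t (Ioc_subset_Icc_self ht)
    rw [hwG t (Ioc_subset_Icc_self ht), ← ENNReal.ofReal_mul hδ.le,
      ← ENNReal.ofReal_add (mul_nonneg hm (hG0 _)) (mul_nonneg hδ.le hm)]
    ring_nf
  refine hcost ▸ iInf_actionCost_le_setLIntegral_mul hγ hab hw hδ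
    (fun t => le_add_of_nonneg_left (hG0 _)) (fun t ht => ?_) ?_
  · rw [hwG t ht, abs_of_nonneg (hG0 _)]
    linarith
  · rw [hcost]
    exact ENNReal.add_ne_top.2 ⟨hC, ENNReal.mul_ne_top ENNReal.ofReal_ne_top
      (hγ.setLIntegral_ofReal_lt_top hab).ne⟩

lemma iInf_actionCost_le_finslerCost {G : X → ℝ} (hG0 : ∀ x, 0 ≤ G x) (hGmeas : Measurable G)
    (x y : X) : ⨅ (T : ℝ) (_ : 0 < T), actionCost G T x y ≤ finslerCost G x y := by
  refine le_sInf ?_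
  rintro _ ⟨γ, m, -, rfl, rfl, hγ, rfl⟩
  rcases eq_or_ne (∫⁻ t in Ioc 0 1, ENNReal.ofReal (m t * G (γ t))) ∞ with hC | hC
  · exact hC ▸ le_top
  exact le_of_forall_pos_le_add_ofReal_mul (hγ.setLIntegral_ofReal_lt_top zero_le_one).ne
    fun δ hδ => iInf_actionCost_le_setLIntegral_add hG0 hGmeas hγ zero_le_one hδ hC

end Costs

theorem finslerCost_eq_iInf_actionCost {X : Type*} [MetricSpace X]
    [MeasurableSpace X] [BorelSpace X]
    (G : X → ℝ) (hG0 : ∀ x, 0 ≤ G x) (hGmeas : Measurable G) (x y : X) :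
    finslerCost G x y = ⨅ (T : ℝ) (_ : 0 < T), actionCost G T x y :=
  le_antisymm (le_iInf₂ fun _ hT => finslerCost_le_actionCost G hT x y)
    (iInf_actionCost_le_finslerCost hG0 hGmeas x y)
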